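/- Negative introspection for sequences of oracles: if T is a Λ-Münchhausen theory with predicate [α]_T, then T ⊢ ∀α ∀σ ∀τ≺α≺Λ ( ⟨τ⟩_T σ → [α]_T ⟨τ⟩_T σ ), where ⟨τ⟩_T σ asserts that every entry ⟨τ_i⟩_T σ(i) holds. -/

import Mathlib

/-- An abstract arithmetical theory `T`: a type `S` of sentences, derivability
`Prov` (for `T ⊢ ·`), falsum and implication, a standard formalized
provability predicate `box` (for `□_T`), an internal representation `ltS` of
the ordering `≺` on (notations for) ordinals, and internal existential
quantifiers over formulas (`exF`), ordinal notations (`exO`), numbers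
(`exN`), and finite sequences of (ordinal, formula) pairs (`exL`). -/
structure MFrame : Type 2 where
  S : Type 1
  Prov : S → Prop
  bot : S
  imp : S → S → S
  box : S → S
  ltS : Ordinal.{0} → Ordinal.{0} → S
  exF : (S → S) → S
  exO : (Ordinal.{0} → S) → S
  exN : (ℕ → S) → S
  exL : (List (Ordinal.{0} × S) → S) → S

namespace MFrame

variable (F : MFrame)

def neg (a : F.S) : F.S := F.imp a F.bot
def top : F.S := F.neg F.bot
def and (a b : F.S) : F.S := F.neg (F.imp a (F.neg b))
def or (a b : F.S) : F.S := F.imp (F.neg a) b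
def iff (a b : F.S) : F.S := F.and (F.imp a b) (F.imp b a)

/-- `⟨ξ⟩_T a := ¬[ξ]_T ¬a` for a candidate Münchhausen predicate `M`. -/
def mdia (M : Ordinal.{0} → F.S → F.S) (ξ : Ordinal.{0}) (a : F.S) : F.S :=
  F.neg (M ξ (F.neg a))

/-- Basic conditions on the theory `T`: classical propositional logic via a
complete Hilbert basis with modus ponens, the Hilbert–Bernays derivability
conditions for `□_T`, introduction/elimination rules for the internal
existential quantifiers, and correctness of the internal ordering `≺`
(true facts `ξ ≺ ζ` are provable, false ones refutable, and `T` proves `≺`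
transitive). -/
structure Basic (F : MFrame) : Prop where
  mp : ∀ {a b : F.S}, F.Prov (F.imp a b) → F.Prov a → F.Prov b
  ax1 : ∀ a b : F.S, F.Prov (F.imp a (F.imp b a))
  ax2 : ∀ a b c : F.S,
    F.Prov (F.imp (F.imp a (F.imp b c)) (F.imp (F.imp a b) (F.imp a c)))
  ax3 : ∀ a b : F.S,
    F.Prov (F.imp (F.imp (F.neg a) (F.neg b)) (F.imp b a))
  nec : ∀ {a : F.S}, F.Prov a → F.Prov (F.box a)
  dist : ∀ a b : F.S,
    F.Prov (F.imp (F.box (F.imp a b)) (F.imp (F.box a) (F.box b)))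
  d3 : ∀ a : F.S, F.Prov (F.imp (F.box a) (F.box (F.box a)))
  ltS_trans : ∀ ξ ζ η : Ordinal,
    F.Prov (F.imp (F.and (F.ltS ξ ζ) (F.ltS ζ η)) (F.ltS ξ η))
  ltS_intro : ∀ {ξ ζ : Ordinal}, ξ < ζ → F.Prov (F.ltS ξ ζ)
  ltS_not : ∀ {ξ ζ : Ordinal}, ¬ ξ < ζ → F.Prov (F.neg (F.ltS ξ ζ))
  exF_intro : ∀ (G : F.S → F.S) (a : F.S), F.Prov (F.imp (G a) (F.exF G))
  exF_elim : ∀ (G : F.S → F.S) (c : F.S),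
    (∀ a, F.Prov (F.imp (G a) c)) → F.Prov (F.imp (F.exF G) c)
  exO_intro : ∀ (G : Ordinal → F.S) (ξ : Ordinal), F.Prov (F.imp (G ξ) (F.exO G))
  exO_elim : ∀ (G : Ordinal → F.S) (c : F.S),
    (∀ ξ, F.Prov (F.imp (G ξ) c)) → F.Prov (F.imp (F.exO G) c)
  exN_intro : ∀ (G : ℕ → F.S) (n : ℕ), F.Prov (F.imp (G n) (F.exN G))
  exN_elim : ∀ (G : ℕ → F.S) (c : F.S),
    (∀ n, F.Prov (F.imp (G n) c)) → F.Prov (F.imp (F.exN G) c)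
  exL_intro : ∀ (G : List (Ordinal × F.S) → F.S) (ρ : List (Ordinal × F.S)),
    F.Prov (F.imp (G ρ) (F.exL G))
  exL_elim : ∀ (G : List (Ordinal × F.S) → F.S) (c : F.S),
    (∀ ρ, F.Prov (F.imp (G ρ) c)) → F.Prov (F.imp (F.exL G) c)

/-- `T` is a single-oracle (one-)Münchhausen theory for `Λ`, with candidate
predicate `M ζ φ` (for `[ζ]_T φ`): `T` proves the defining recursion
`[ζ]φ ↔ □φ ∨ ∃ψ ∃ξ≺ζ (⟨ξ⟩ψ ∧ □(⟨ξ⟩ψ → φ))` for `ζ ≺ Λ`, proves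
`ξ ≺ ζ → [ζ](ξ ≺ ζ)`, and proves that `0` is the `≺`-minimal element. -/
structure OneMunch (F : MFrame) (Λ : Ordinal.{0}) (M : Ordinal.{0} → F.S → F.S) : Prop where
  recEq : ∀ ζ < Λ, ∀ φ : F.S,
    F.Prov (F.iff (M ζ φ)
      (F.or (F.box φ)
        (F.exF fun ψ => F.exO fun ξ =>
          F.and (F.ltS ξ ζ)
            (F.and (F.mdia M ξ ψ) (F.box (F.imp (F.mdia M ξ ψ) φ))))))
  ltS_box : ∀ {ξ ζ : Ordinal}, ξ < ζ →
    F.Prov (F.imp (F.ltS ξ ζ) (M ζ (F.ltS ξ ζ)))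
  min_zero : ∀ ξ : Ordinal, F.Prov (F.neg (F.ltS ξ 0))

/-- The internal conjunction `⟨τ⟩_T σ` asserting of a finite sequence `ρ` of
pairs (ordinal `τ_i`, formula `σ(i)`) that every `⟨τ_i⟩_T σ(i)` holds. -/
def listDia (M : Ordinal.{0} → F.S → F.S) (ρ : List (Ordinal.{0} × F.S)) : F.S :=
  ρ.foldr (fun p acc => F.and (F.mdia M p.1 p.2) acc) F.top

/-- The internal conjunction asserting `τ ≺ α`, i.e. every ordinal entry of
the sequence `ρ` is `≺ α`. -/
def listLt (ρ : List (Ordinal.{0} × F.S)) (α : Ordinal.{0}) : F.S :=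
  ρ.foldr (fun p acc => F.and (F.ltS p.1 α) acc) F.top

/-- `T` is a (multiple-oracle) Münchhausen theory for `Λ` with candidate
predicate `M α φ`: `T` proves the recursion
`[α]φ ↔ □φ ∨ ∃σ ∃τ≺α (⟨τ⟩σ ∧ □(⟨τ⟩σ → φ))`, where the internal existential
ranges over finite sequences `ρ` of pairs (which encodes the pair `σ, τ` of
equal-length sequences of formulas and of ordinals), together with
`ξ ≺ ζ → [ζ](ξ ≺ ζ)`. -/
structure MultiMunch (F : MFrame) (Λ : Ordinal.{0}) (M : Ordinal.{0} → F.S → F.S) : Prop where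
  recEq : ∀ α < Λ, ∀ φ : F.S,
    F.Prov (F.iff (M α φ)
      (F.or (F.box φ)
        (F.exL fun ρ =>
          F.and (F.listLt ρ α)
            (F.and (F.listDia M ρ) (F.box (F.imp (F.listDia M ρ) φ))))))
  ltS_box : ∀ {ξ ζ : Ordinal}, ξ < ζ →
    F.Prov (F.imp (F.ltS ξ ζ) (M ζ (F.ltS ξ ζ)))
  min_zero : ∀ ξ : Ordinal, F.Prov (F.neg (F.ltS ξ 0))

/-- Truth in the standard model: a predicate `Tr` making `T` sound, commuting
with the logical operations, with `Tr (□φ) ↔ T ⊢ φ` and with the internal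
quantifiers and ordering evaluated standardly. -/
structure Truth (F : MFrame) (Tr : F.S → Prop) : Prop where
  sound : ∀ a : F.S, F.Prov a → Tr a
  bot : ¬ Tr F.bot
  imp : ∀ a b : F.S, Tr (F.imp a b) ↔ (Tr a → Tr b)
  box : ∀ a : F.S, Tr (F.box a) ↔ F.Prov a
  ltS : ∀ ξ ζ : Ordinal, Tr (F.ltS ξ ζ) ↔ ξ < ζ
  exF : ∀ G : F.S → F.S, Tr (F.exF G) ↔ ∃ a, Tr (G a)
  exO : ∀ G : Ordinal → F.S, Tr (F.exO G) ↔ ∃ ξ, Tr (G ξ)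
  exN : ∀ G : ℕ → F.S, Tr (F.exN G) ↔ ∃ n, Tr (G n)
  exL : ∀ G : List (Ordinal × F.S) → F.S, Tr (F.exL G) ↔ ∃ ρ, Tr (G ρ)

end MFrame

/-!
The pair `(σ, τ)` is its own oracle: since `τ ≺ α` holds provably and
`□_T(⟨τ⟩σ → ⟨τ⟩σ)` is a theorem, `⟨τ⟩σ` implies the second disjunct of the
recursion for `[α]_T ⟨τ⟩σ`.
-/

namespace MFrame

variable {F : MFrame}

namespace Basic

variable (hF : F.Basic)
include hF

theorem imp_of_prov {b : F.S} (a : F.S) (h : F.Prov b) : F.Prov (F.imp a b) :=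
  hF.mp (hF.ax1 b a) h

theorem imp_self (a : F.S) : F.Prov (F.imp a a) :=
  hF.mp (hF.mp (hF.ax2 a (F.imp a a) a) (hF.ax1 a (F.imp a a))) (hF.ax1 a a)

theorem imp_trans {a b c : F.S} (hab : F.Prov (F.imp a b)) (hbc : F.Prov (F.imp b c)) :
    F.Prov (F.imp a c) :=
  hF.mp (hF.mp (hF.ax2 a b c) (hF.imp_of_prov a hbc)) hab

theorem imp_swap {a b c : F.S} (h : F.Prov (F.imp a (F.imp b c))) :
    F.Prov (F.imp b (F.imp a c)) :=
  hF.imp_trans (hF.ax1 b a) (hF.mp (hF.ax2 a b c) h)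

theorem imp_apply (a c : F.S) : F.Prov (F.imp a (F.imp (F.imp a c) c)) :=
  hF.imp_swap (hF.imp_self (F.imp a c))

theorem imp_precomp {a c : F.S} (h : F.Prov (F.imp c a)) (x : F.S) :
    F.Prov (F.imp (F.imp a x) (F.imp c x)) :=
  hF.imp_swap (hF.imp_trans h (hF.imp_apply a x))

theorem and_elim_right (a b : F.S) : F.Prov (F.imp (F.and a b) b) :=
  hF.mp (hF.ax3 b (F.and a b))
    (hF.imp_trans (hF.ax1 (F.neg b) a) (hF.imp_apply (F.imp a (F.neg b)) F.bot))

theorem iff_mpr {a b : F.S} (h : F.Prov (F.iff a b)) : F.Prov (F.imp b a) :=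
  hF.mp (hF.and_elim_right _ _) h

theorem imp_and {a b c : F.S} (ha : F.Prov (F.imp c a)) (hb : F.Prov (F.imp c b)) :
    F.Prov (F.imp c (F.and a b)) := by
  have hcb : F.Prov (F.imp (F.imp a (F.neg b)) (F.imp (F.imp c b) (F.neg c))) :=
    hF.imp_trans (hF.imp_precomp ha (F.neg b)) (hF.ax2 c b F.bot)
  exact hF.imp_swap (hF.mp (hF.imp_swap hcb) hb)

theorem prov_and {a b : F.S} (ha : F.Prov a) (hb : F.Prov b) : F.Prov (F.and a b) :=
  hF.mp (hF.imp_swap (hF.mp (hF.imp_apply a (F.neg b)) ha)) hb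

theorem prov_listLt {α : Ordinal} {ρ : List (Ordinal × F.S)} (h : ∀ p ∈ ρ, p.1 < α) :
    F.Prov (F.listLt ρ α) := by
  induction ρ with
  | nil => exact hF.imp_self F.bot
  | cons p ρ ih =>
    exact hF.prov_and (hF.ltS_intro (h p List.mem_cons_self))
      (ih fun q hq => h q (List.mem_cons_of_mem p hq))

end Basic

theorem MultiMunch.listDia_imp_of_prov_imp {Λ : Ordinal} {M : Ordinal → F.S → F.S}
    (hF : F.Basic) (hM : F.MultiMunch Λ M) {α : Ordinal} (hα : α < Λ)
    {ρ : List (Ordinal × F.S)} (hρ : ∀ p ∈ ρ, p.1 < α) {φ : F.S}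
    (h : F.Prov (F.imp (F.listDia M ρ) φ)) :
    F.Prov (F.imp (F.listDia M ρ) (M α φ)) := by
  set d := F.listDia M ρ
  set G : List (Ordinal × F.S) → F.S := fun ρ' =>
    F.and (F.listLt ρ' α) (F.and (F.listDia M ρ') (F.box (F.imp (F.listDia M ρ') φ)))
  have hwitness : F.Prov (F.imp d (G ρ)) :=
    hF.imp_and (hF.imp_of_prov d (hF.prov_listLt hρ))
      (hF.imp_and (hF.imp_self d) (hF.imp_of_prov d (hF.nec h)))
  have hrec : F.Prov (F.imp (F.or (F.box φ) (F.exL G)) (M α φ)) :=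
    hF.iff_mpr (hM.recEq α hα φ)
  exact hF.imp_trans (hF.imp_trans hwitness (hF.exL_intro G ρ))
    (hF.imp_trans (hF.ax1 (F.exL G) (F.neg (F.box φ))) hrec)

end MFrame

/-- negative introspection for sequences of oracles: for
`τ ≺ α ≺ Λ` (every ordinal entry of the sequence `ρ` of oracles below `α`),
`T ⊢ ⟨τ⟩_T σ → [α]_T ⟨τ⟩_T σ`. -/
theorem multiMunch_seq_negIntro (F : MFrame) (hF : F.Basic)
    (Λ : Ordinal) (M : Ordinal → F.S → F.S) (hM : F.MultiMunch Λ M) :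
    ∀ α < Λ, ∀ ρ : List (Ordinal × F.S), (∀ p ∈ ρ, p.1 < α) →
      F.Prov (F.imp (F.listDia M ρ) (M α (F.listDia M ρ))) :=
  fun _ hα _ hρ => hM.listDia_imp_of_prov_imp hF hα hρ (hF.imp_self _)
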